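/- arXiv:1805.11871 — 3 statements merged into one kernel-verified Lean document; each statement's English description precedes it below -/
import Mathlib

section
/- Let (X, μ) be a finite measure space, n ≥ 1, and M = {m ∈ ℝⁿ : mᵢ > 0, Σmᵢ = 1}. Let c : Fin n → X → M → ℝ with cᵢ(x, ·) continuous on M for each x and cᵢ(·, m) measurable for each m. Assume the hyperbola property: for all i ≠ j and all m ∈ M, μ({x : cᵢ(x,m) = cⱼ(x,m)}) = 0. Fix a tie-breaking rule and define I_m(x) as the least index minimizing i ↦ cᵢ(x,m), and fᵢ(m) = μ({x : I_m(x) = i}). Then each fᵢ : M → ℝ is continuous. -/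
open MeasureTheory Filter Set Topology

/-- Continuity of realized group sizes in nominal group sizes (Claim 1):
under the hyperbola property, the measure of the set of agents whose least
cost-minimizing community is `i` depends continuously on the nominal sizes
`m` in the open simplex `M`. -/
theorem realized_sizes_continuous
    {X : Type*} [MeasurableSpace X] (μ : Measure X) [IsFiniteMeasure μ]
    (n : ℕ) (hn : 1 ≤ n)
    (M : Set (Fin n → ℝ))
    (hM : M = {m : Fin n → ℝ | (∀ i, 0 < m i) ∧ ∑ i, m i = 1})
    (c : Fin n → X → (Fin n → ℝ) → ℝ)
    (hc_cont : ∀ i x, ContinuousOn (c i x) M)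
    (hc_meas : ∀ i m, Measurable (fun x => c i x m))
    (hyperbola : ∀ i j, i ≠ j → ∀ m ∈ M, μ {x | c i x m = c j x m} = 0)
    (Imin : (Fin n → ℝ) → X → Fin n)
    (hImin : ∀ m ∈ M, ∀ x,
      (∀ j, c (Imin m x) x m ≤ c j x m) ∧
      (∀ i, (∀ j, c i x m ≤ c j x m) → Imin m x ≤ i))
    (hImin_meas : ∀ m ∈ M, Measurable (Imin m)) :
    ∀ i, ContinuousOn (fun m => (μ {x | Imin m x = i}).toReal) M := by
  intro i m₀ hm₀
  have hS : ∀ m ∈ M, MeasurableSet {x | Imin m x = i} := fun m hm => by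
    have := hImin_meas m hm (measurableSet_singleton i)
    simpa [Set.preimage, Set.mem_singleton_iff] using this
  rw [ContinuousWithinAt, tendsto_iff_seq_tendsto]
  intro u hu
  have huM : ∀ᶠ l in atTop, u l ∈ M := hu.eventually eventually_mem_nhdsWithin
  -- a.e. no ties at m₀
  have hae : ∀ᵐ x ∂μ, ∀ j k, j ≠ k → c j x m₀ ≠ c k x m₀ := by
    rw [ae_all_iff]; intro j
    rw [ae_all_iff]; intro k
    by_cases hjk : j = k
    · filter_upwards with x h; exact absurd hjk h
    · have h0 := hyperbola j k hjk m₀ hm₀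
      have := (measure_eq_zero_iff_ae_notMem (μ := μ)).1 h0
      filter_upwards [this] with x hx _
      exact fun h => hx h
  -- a.e., the selected index eventually stabilizes
  have key : ∀ᵐ x ∂μ, ∀ᶠ l in atTop, Imin (u l) x = Imin m₀ x := by
    filter_upwards [hae] with x hx
    set i₀ := Imin m₀ x with hi₀
    have hmin := (hImin m₀ hm₀ x).1
    have hstrict : ∀ j, j ≠ i₀ → c i₀ x m₀ < c j x m₀ := fun j hj =>
      lt_of_le_of_ne (hmin j) (hx i₀ j (fun h => hj h.symm))
    have hc : ∀ k, Tendsto (fun l => c k x (u l)) atTop (𝓝 (c k x m₀)) :=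
      fun k => ((hc_cont k x m₀ hm₀).tendsto).comp hu
    have hev : ∀ᶠ l in atTop, ∀ j, j ≠ i₀ → c i₀ x (u l) < c j x (u l) := by
      rw [eventually_all]
      intro j
      by_cases hj : j = i₀
      · filter_upwards with l h; exact absurd hj h
      · filter_upwards [(hc i₀).eventually_lt (hc j) (hstrict j hj)] with l h _
        exact h
    filter_upwards [hev, huM] with l hl hlM
    by_contra hne
    exact absurd ((hImin (u l) hlM x).1 i₀) (not_le.2 (hl (Imin (u l) x) hne))
  -- dominated convergence for the indicators
  have hDCT := tendsto_integral_filter_of_dominated_convergence (μ := μ) (l := atTop)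
      (F := fun l => Set.indicator {x | Imin (u l) x = i} (fun _ => (1 : ℝ)))
      (f := Set.indicator {x | Imin m₀ x = i} (fun _ => (1 : ℝ)))
      (bound := fun _ => (1 : ℝ))
      (huM.mono fun l hl => (measurable_const.indicator (hS _ hl)).aestronglyMeasurable)
      (by
        filter_upwards with l
        filter_upwards with x
        by_cases hx : x ∈ {x | Imin (u l) x = i} <;>
          simp [Set.indicator_apply, hx])
      (integrable_const 1)
      (by
        filter_upwards [key] with x hx
        refine Tendsto.congr' ?_ tendsto_const_nhds
        filter_upwards [hx] with l hl
        simp [Set.indicator_apply, hl])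
  have hlim : ∫ x, Set.indicator {x | Imin m₀ x = i} (fun _ => (1 : ℝ)) x ∂μ
      = (μ {x | Imin m₀ x = i}).toReal := integral_indicator_one (hS m₀ hm₀)
  rw [hlim] at hDCT
  refine hDCT.congr' ?_
  filter_upwards [huM] with l hl
  simp only [Function.comp]
  exact integral_indicator_one (hS _ hl)
end

section
/- Under the hypotheses of the continuity claim, suppose additionally: (boundedness) for every δ > 0 there is A_δ with cᵢ(x,m) ≤ A_δ whenever mᵢ ≥ δ, for all x and all m ∈ M; and (small-group inefficiency) for every A ∈ ℝ there is m⁰ > 0 such that cᵢ(x,m) > A whenever mᵢ < m⁰, for all x ∈ X and all i. Then there exists ε ∈ (0, 1/n) such that for all m in the restricted simplex M_ε = {m : mᵢ ≥ ε, Σmⱼ = 1} and all i, if mᵢ = ε then μ({x : I_m(x) = i}) = 0. More precisely: if mᵢ ≤ ε then fᵢ(m) = 0. -/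
open MeasureTheory

/-! Some community always has nominal size at least `1/n`, so by boundedness joining it costs at
most some `A`. Small-group inefficiency makes every community smaller than some `m₀` cost more
than `A`; hence for `ε < min m₀ (1/n)` no agent minimizes its cost at a community of size
at most `ε`, and the set of agents choosing it is empty. -/

theorem exists_one_div_card_le_of_sum_eq_one {ι : Type*} [Fintype ι] [Nonempty ι]
    {m : ι → ℝ} (hm : ∑ i, m i = 1) : ∃ j, 1 / (Fintype.card ι : ℝ) ≤ m j := by
  have hsum : ∑ _j : ι, 1 / (Fintype.card ι : ℝ) ≤ ∑ j, m j := by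
    simp [hm]
  obtain ⟨j, -, hj⟩ := Finset.exists_le_of_sum_le Finset.univ_nonempty hsum
  exact ⟨j, hj⟩

theorem setOf_argmin_eq_empty_of_dominated {X ι : Type*} (c : ι → X → ℝ) (I : X → ι)
    (hI : ∀ x j, c (I x) x ≤ c j x) {i : ι} (hdom : ∀ x, ∃ j, c j x < c i x) :
    {x | I x = i} = ∅ := by
  refine Set.eq_empty_of_forall_notMem fun x hx => ?_
  obtain ⟨j, hj⟩ := hdom x
  have hle := hI x j
  rw [hx] at hle
  exact hle.not_gt hj

theorem small_groups_attract_nobody_general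
    {X : Type*} [MeasurableSpace X] (μ : Measure X)
    (n : ℕ) (hn : 1 ≤ n)
    (M : Set (Fin n → ℝ))
    (hM : M = {m : Fin n → ℝ | (∀ i, 0 < m i) ∧ ∑ i, m i = 1})
    (c : Fin n → X → (Fin n → ℝ) → ℝ)
    (hbound : ∀ δ > (0:ℝ), ∃ A : ℝ, ∀ i, ∀ x, ∀ m ∈ M, δ ≤ m i → c i x m ≤ A)
    (hsmall : ∀ A : ℝ, ∃ m₀ > (0:ℝ), ∀ i, ∀ x, ∀ m ∈ M, m i < m₀ → A < c i x m)
    (Imin : (Fin n → ℝ) → X → Fin n)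
    (hImin : ∀ m ∈ M, ∀ x,
      (∀ j, c (Imin m x) x m ≤ c j x m) ∧
      (∀ i, (∀ j, c i x m ≤ c j x m) → Imin m x ≤ i)) :
    ∃ ε : ℝ, 0 < ε ∧ ε < 1 / n ∧
      ∀ m ∈ M, (∀ i, ε ≤ m i) →
        ∀ i, m i ≤ ε → μ {x | Imin m x = i} = 0 := by
  have : Nonempty (Fin n) := ⟨⟨0, hn⟩⟩
  have hn_inv : (0 : ℝ) < 1 / n := by positivity
  obtain ⟨A, hA⟩ := hbound (1 / n) hn_inv
  obtain ⟨m₀, hm₀, hcost⟩ := hsmall A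
  have hε : min m₀ (1 / n) / 2 < min m₀ (1 / n) := half_lt_self (lt_min hm₀ hn_inv)
  refine ⟨min m₀ (1 / n) / 2, by positivity, hε.trans_le (min_le_right _ _),
    fun m hm _ i hi => ?_⟩
  obtain ⟨j, hj⟩ := exists_one_div_card_le_of_sum_eq_one (hM ▸ hm).2
  rw [Fintype.card_fin] at hj
  have hdom : ∀ x, ∃ j, c j x m < c i x m := fun x =>
    ⟨j, (hA j x m hm hj).trans_lt
      (hcost i x m hm (hi.trans_lt (hε.trans_le (min_le_left _ _))))⟩
  rw [setOf_argmin_eq_empty_of_dominated (fun i x => c i x m) (Imin m) (fun x => (hImin m hm x).1)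
    hdom, measure_empty]

/-- Claim 2: under boundedness on groups of size at least `δ` and small-group
inefficiency, there exists `ε ∈ (0, 1/n)` such that on the `ε`-restricted
simplex, any community of nominal size at most `ε` attracts a null set of
agents. -/
theorem small_groups_attract_nobody
    {X : Type*} [MeasurableSpace X] (μ : Measure X) [IsFiniteMeasure μ]
    (n : ℕ) (hn : 1 ≤ n)
    (M : Set (Fin n → ℝ))
    (hM : M = {m : Fin n → ℝ | (∀ i, 0 < m i) ∧ ∑ i, m i = 1})
    (c : Fin n → X → (Fin n → ℝ) → ℝ)
    (hc_cont : ∀ i x, ContinuousOn (c i x) M)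
    (hc_meas : ∀ i m, Measurable (fun x => c i x m))
    (hbound : ∀ δ > (0:ℝ), ∃ A : ℝ, ∀ i, ∀ x, ∀ m ∈ M, δ ≤ m i → c i x m ≤ A)
    (hsmall : ∀ A : ℝ, ∃ m₀ > (0:ℝ), ∀ i, ∀ x, ∀ m ∈ M, m i < m₀ → A < c i x m)
    (Imin : (Fin n → ℝ) → X → Fin n)
    (hImin : ∀ m ∈ M, ∀ x,
      (∀ j, c (Imin m x) x m ≤ c j x m) ∧
      (∀ i, (∀ j, c i x m ≤ c j x m) → Imin m x ≤ i)) :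
    ∃ ε : ℝ, 0 < ε ∧ ε < 1 / n ∧
      ∀ m ∈ M, (∀ i, ε ≤ m i) →
        ∀ i, m i ≤ ε → μ {x | Imin m x = i} = 0 :=
  small_groups_attract_nobody_general μ n hn M hM c hbound hsmall Imin hImin
end

section
/- Let n ≥ 1, M = {m ∈ ℝⁿ : mᵢ > 0, Σmᵢ = 1}, and suppose each agent's cost is separable: cᵢ(x,m) = c^d_i(x) + c^s_i(mᵢ) with each c^s_i : (0,1) → ℝ strictly decreasing. Let (m*, I*) be an equilibrium with all groups nonempty: a.e. agent x satisfies c_{I*(x)}(x, m*) = min_i cᵢ(x, m*) and the group measures equal m*. Then there is no alternative feasible assignment I' with group sizes m' ∈ M (same total mass) such that every agent is strictly better off, i.e. c_{I'(x)}(x, m') < c_{I*(x)}(x, m*) for a.e. x. -/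
open MeasureTheory

/-- First-welfare-theorem analogue: with separable costs
`cᵢ(x,m) = c^d_i(x) + c^s_i(mᵢ)` where each `c^s_i` is strictly decreasing on
`(0,1)`, no feasible alternative assignment makes almost every agent strictly
better off than in an equilibrium with all groups nonempty. -/
theorem equilibrium_pareto_optimal
    {X : Type*} [MeasurableSpace X] (μ : Measure X) [IsFiniteMeasure μ]
    (hμ : μ Set.univ = 1)
    (n : ℕ) (hn : 1 ≤ n)
    (M : Set (Fin n → ℝ))
    (hM : M = {m : Fin n → ℝ | (∀ i, 0 < m i) ∧ ∑ i, m i = 1})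
    (cd : Fin n → X → ℝ) (cs : Fin n → ℝ → ℝ)
    (hcs : ∀ i, StrictAntiOn (cs i) (Set.Ioo (0:ℝ) 1))
    -- equilibrium data: sizes m' and assignment I'
    (m' : Fin n → ℝ) (I' : X → Fin n)
    (hm' : m' ∈ M)
    (hI'_meas : Measurable I')
    (hsizes : ∀ i, (μ {x | I' x = i}).toReal = m' i)
    (hopt : ∀ᵐ x ∂μ, ∀ j,
      cd (I' x) x + cs (I' x) (m' (I' x)) ≤ cd j x + cs j (m' j)) :
    ¬ ∃ (m'' : Fin n → ℝ) (I'' : X → Fin n), m'' ∈ M ∧ Measurable I'' ∧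
        (∀ i, (μ {x | I'' x = i}).toReal = m'' i) ∧
        (∀ᵐ x ∂μ,
          cd (I'' x) x + cs (I'' x) (m'' (I'' x)) <
            cd (I' x) x + cs (I' x) (m' (I' x))) := by
  rintro ⟨m'', I'', hm'', hI''_meas, hsizes'', himp⟩
  rw [hM] at hm' hm''
  obtain ⟨hm'pos, hm'sum⟩ := hm'
  obtain ⟨hm''pos, hm''sum⟩ := hm''
  have hex : ∃ i, m'' i ≤ m' i := by
    by_contra h
    push_neg at h
    have : ∑ i, m' i < ∑ i, m'' i :=
      Finset.sum_lt_sum_of_nonempty (Finset.univ_nonempty_iff.2 ⟨⟨0, hn⟩⟩)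
        (fun i _ => h i)
    rw [hm'sum, hm''sum] at this
    exact lt_irrefl _ this
  obtain ⟨i, hi⟩ := hex
  have hcs_le : cs i (m' i) ≤ cs i (m'' i) := by
    rcases eq_or_lt_of_le hi with heq | hlt
    · rw [heq]
    · have hm'lt1 : m' i < 1 := by
        by_contra h1
        push_neg at h1
        by_cases hj : ∃ j, j ≠ i
        · obtain ⟨j, hj⟩ := hj
          have h2 : m' j ≤ ∑ x ∈ Finset.univ.erase i, m' x :=
            Finset.single_le_sum (fun k _ => (hm'pos k).le)
              (Finset.mem_erase.2 ⟨hj, Finset.mem_univ j⟩)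
          have h3 := Finset.sum_erase_add Finset.univ m' (Finset.mem_univ i)
          rw [hm'sum] at h3
          linarith [hm'pos j]
        · push_neg at hj
          have huniv : (Finset.univ : Finset (Fin n)) = {i} :=
            Finset.eq_singleton_iff_unique_mem.2 ⟨Finset.mem_univ i, fun j _ => hj j⟩
          rw [huniv, Finset.sum_singleton] at hm'sum hm''sum
          linarith
      exact le_of_lt ((hcs i) ⟨hm''pos i, lt_trans hlt hm'lt1⟩ ⟨hm'pos i, hm'lt1⟩ hlt)
  have hSpos : μ {x | I'' x = i} ≠ 0 := by
    intro h0
    have h2 := hsizes'' i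
    rw [h0] at h2
    simp at h2
    linarith [hm''pos i]
  obtain ⟨x, hxS, hx1, hx2⟩ :=
    Measure.exists_mem_of_measure_ne_zero_of_ae hSpos (ae_restrict_of_ae (hopt.and himp))
  have hxi : I'' x = i := hxS
  rw [hxi] at hx2
  have := hx1 i
  linarith
end
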